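/- In the spatial Schwarzschild manifold (M_{r₀}, g^S_m) with m ≠ 0 and r₀ > 2m, the harmonic function u that vanishes on the boundary {r = r₀} and tends to 1 at infinity is u = (v − v(r₀))/(1 − v(r₀)) with v(r) = √(1 − 2m/r), and the capacity of the boundary equals (1/(4π)) ∫_M |∇u|² dg = m / (1 − √(1 − 2m/r₀)). -/

import Mathlib

open MeasureTheory Set Filter Real

/-!
Writing `v r = √(1 - 2m/r)`, one has `v' = m / (r² v)`, so the flux `r² v u'` of
`u = (v - v(r₀)) / (1 - v(r₀))` is the constant `C = m / (1 - v(r₀))` and `u` is harmonic.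
Since `u' > 0`, the energy integrand `r² v u'² = C u'` integrates over `(r₀, ∞)` to
`C (u(∞) - u(r₀)) = C`.
-/

lemma hasDerivAt_sqrt_one_sub_two_mul_div {m x : ℝ} (hx : 0 < x) (h : 2 * m < x) :
    HasDerivAt (fun s => √(1 - 2 * m / s)) (m / (x ^ 2 * √(1 - 2 * m / x))) x := by
  have hpos : 0 < 1 - 2 * m / x := by rwa [sub_pos, div_lt_one hx]
  have hinner : HasDerivAt (fun s => 1 - 2 * m / s) (2 * m / x ^ 2) x := by
    simpa [div_eq_mul_inv] using ((hasDerivAt_inv hx.ne').const_mul (2 * m)).const_sub 1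
  convert hinner.sqrt hpos.ne' using 1
  field_simp

lemma tendsto_sqrt_one_sub_div_atTop (a : ℝ) :
    Tendsto (fun r => √(1 - a / r)) atTop (nhds 1) := by
  have h : Tendsto (fun r => 1 - a / r) atTop (nhds (1 - 0)) :=
    tendsto_const_nhds.sub (tendsto_const_nhds.div_atTop tendsto_id)
  simpa [Function.comp_def] using (continuous_sqrt.tendsto _).comp h

noncomputable def schwarzschildPotential (m r₀ r : ℝ) : ℝ :=
  (√(1 - 2 * m / r) - √(1 - 2 * m / r₀)) / (1 - √(1 - 2 * m / r₀))

noncomputable def schwarzschildCapacity (m r₀ : ℝ) : ℝ :=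
  m / (1 - √(1 - 2 * m / r₀))

section

variable {m r₀ : ℝ}

/-- Rationalizing the denominator: `(1 - v)(1 + v) = 2m/r₀`. -/
lemma schwarzschildCapacity_eq (hm : m ≠ 0) (hr₀ : 0 < r₀) (h2m : 2 * m < r₀) :
    schwarzschildCapacity m r₀ = r₀ * (1 + √(1 - 2 * m / r₀)) / 2 := by
  set q := √(1 - 2 * m / r₀) with hq
  have hq_sq : q ^ 2 = 1 - 2 * m / r₀ :=
    sq_sqrt (by rw [sub_nonneg, div_le_one hr₀]; exact h2m.le)
  have hm_eq : m = r₀ * (1 - q) * (1 + q) / 2 := by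
    field_simp at hq_sq
    linear_combination hq_sq / 2
  have hq_ne : 1 - q ≠ 0 := by
    intro h
    exact hm (by rw [hm_eq, h]; ring)
  rw [schwarzschildCapacity, ← hq, eq_div_iff two_ne_zero, div_mul_eq_mul_div,
    div_eq_iff hq_ne, hm_eq]
  ring

lemma schwarzschildCapacity_pos (hm : m ≠ 0) (hr₀ : 0 < r₀) (h2m : 2 * m < r₀) :
    0 < schwarzschildCapacity m r₀ := by
  rw [schwarzschildCapacity_eq hm hr₀ h2m]
  positivity

lemma one_sub_sqrt_one_sub_two_mul_div_ne_zero (hm : m ≠ 0) (hr₀ : 0 < r₀) (h2m : 2 * m < r₀) :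
    1 - √(1 - 2 * m / r₀) ≠ 0 := by
  intro h
  have := schwarzschildCapacity_pos hm hr₀ h2m
  rw [schwarzschildCapacity, h, div_zero] at this
  exact this.false

lemma schwarzschildPotential_self : schwarzschildPotential m r₀ r₀ = 0 := by
  rw [schwarzschildPotential, sub_self, zero_div]

lemma tendsto_schwarzschildPotential_atTop (hc : 1 - √(1 - 2 * m / r₀) ≠ 0) :
    Tendsto (schwarzschildPotential m r₀) atTop (nhds 1) := by
  have h := ((tendsto_sqrt_one_sub_div_atTop (2 * m)).sub_const √(1 - 2 * m / r₀)).div_const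
    (1 - √(1 - 2 * m / r₀))
  rwa [div_self hc] at h

lemma hasDerivAt_schwarzschildPotential {x : ℝ} (hx : 0 < x) (h : 2 * m < x) :
    HasDerivAt (schwarzschildPotential m r₀)
      (schwarzschildCapacity m r₀ / (x ^ 2 * √(1 - 2 * m / x))) x := by
  refine ((hasDerivAt_sqrt_one_sub_two_mul_div hx h).sub_const
    √(1 - 2 * m / r₀)).div_const (1 - √(1 - 2 * m / r₀)) |>.congr_deriv ?_
  rw [schwarzschildCapacity, div_div, div_div, mul_comm]

lemma flux_schwarzschildPotential {x : ℝ} (hx : 0 < x) (h : 2 * m < x) :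
    x ^ 2 * √(1 - 2 * m / x) * deriv (schwarzschildPotential m r₀) x =
      schwarzschildCapacity m r₀ := by
  have hsqrt : 0 < √(1 - 2 * m / x) := sqrt_pos.2 (by rwa [sub_pos, div_lt_one hx])
  rw [(hasDerivAt_schwarzschildPotential hx h).deriv, mul_div_cancel₀ _ (by positivity)]

lemma deriv_flux_schwarzschildPotential {r : ℝ} (hr : 0 < r) (h : 2 * m < r) :
    deriv (fun s => s ^ 2 * √(1 - 2 * m / s) * deriv (schwarzschildPotential m r₀) s) r = 0 := by
  have hconst : (fun s => s ^ 2 * √(1 - 2 * m / s) * deriv (schwarzschildPotential m r₀) s)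
      =ᶠ[nhds r] fun _ => schwarzschildCapacity m r₀ := by
    filter_upwards [Ioi_mem_nhds hr, Ioi_mem_nhds h] with s hs h2s
    exact flux_schwarzschildPotential hs h2s
  rw [hconst.deriv_eq, deriv_const]

lemma integral_energy_schwarzschildPotential (hm : m ≠ 0) (hr₀ : 0 < r₀) (h2m : 2 * m < r₀) :
    ∫ r in Ioi r₀, r ^ 2 * √(1 - 2 * m / r) * deriv (schwarzschildPotential m r₀) r ^ 2 =
      schwarzschildCapacity m r₀ := by
  have hderiv : ∀ x ∈ Ici r₀, HasDerivAt (schwarzschildPotential m r₀)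
      (deriv (schwarzschildPotential m r₀) x) x := fun x hx =>
    (hasDerivAt_schwarzschildPotential (hr₀.trans_le hx) (h2m.trans_le hx)).differentiableAt
      |>.hasDerivAt
  have hderiv_nonneg : ∀ x ∈ Ioi r₀, 0 ≤ deriv (schwarzschildPotential m r₀) x := by
    intro x hx
    have hx₀ : 0 < x := hr₀.trans hx
    rw [(hasDerivAt_schwarzschildPotential hx₀ (h2m.trans hx)).deriv]
    have := schwarzschildCapacity_pos hm hr₀ h2m
    positivity
  have hintegral : ∫ x in Ioi r₀, deriv (schwarzschildPotential m r₀) x = 1 := by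
    rw [integral_Ioi_of_hasDerivAt_of_nonneg' hderiv hderiv_nonneg
      (tendsto_schwarzschildPotential_atTop (one_sub_sqrt_one_sub_two_mul_div_ne_zero hm hr₀ h2m)),
      schwarzschildPotential_self, sub_zero]
  calc ∫ r in Ioi r₀, r ^ 2 * √(1 - 2 * m / r) * deriv (schwarzschildPotential m r₀) r ^ 2
      = ∫ r in Ioi r₀, schwarzschildCapacity m r₀ * deriv (schwarzschildPotential m r₀) r := by
        refine setIntegral_congr_fun measurableSet_Ioi fun r hr => ?_
        rw [← flux_schwarzschildPotential (hr₀.trans hr) (h2m.trans hr)]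
        ring
    _ = schwarzschildCapacity m r₀ := by rw [integral_const_mul, hintegral, mul_one]

end

/-- In the spatial Schwarzschild manifold `(M_{r₀}, g^S_m)`, `m ≠ 0`, `r₀ > 2m`,
the harmonic function vanishing on `{r = r₀}` and tending to `1` at `∞` is
`u = (v - v(r₀))/(1 - v(r₀))`, `v(r) = √(1-2m/r)`, and the capacity
`(1/(4π)) ∫_M |∇u|² dg` equals `m/(1 - √(1-2m/r₀))`.  For a radial function the
Laplacian is `r⁻²√(1-2m/r) d/dr (r²√(1-2m/r) u')` and the Dirichlet energy is
`∫_M |∇u|² dg = 4π ∫_{r₀}^∞ r²√(1-2m/r) u'(r)² dr`. -/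
theorem stmt5 (m r₀ : ℝ) (hm : m ≠ 0) (hr₀ : 0 < r₀) (h2m : 2 * m < r₀)
    (v u : ℝ → ℝ)
    (hv : ∀ r, v r = Real.sqrt (1 - 2 * m / r))
    (hu : ∀ r, u r = (v r - v r₀) / (1 - v r₀)) :
    u r₀ = 0 ∧ Tendsto u atTop (nhds 1) ∧
    (∀ r, r₀ ≤ r →
      deriv (fun s => s ^ 2 * Real.sqrt (1 - 2 * m / s) * deriv u s) r = 0) ∧
    (1 / (4 * π)) *
        (4 * π * ∫ r in Ioi r₀, r ^ 2 * Real.sqrt (1 - 2 * m / r) * (deriv u r) ^ 2)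
      = m / (1 - Real.sqrt (1 - 2 * m / r₀)) := by
  obtain rfl : u = schwarzschildPotential m r₀ := funext fun r => by
    rw [hu, hv, hv, schwarzschildPotential]
  refine ⟨schwarzschildPotential_self,
    tendsto_schwarzschildPotential_atTop (one_sub_sqrt_one_sub_two_mul_div_ne_zero hm hr₀ h2m),
    fun r hr => deriv_flux_schwarzschildPotential (hr₀.trans_le hr) (h2m.trans_le hr), ?_⟩
  rw [integral_energy_schwarzschildPotential hm hr₀ h2m, schwarzschildCapacity]
  field_simp
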